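/- Let G = K_1 ∨ (C_{k_1} ∪ C_{k_2} ∪ ⋯ ∪ C_{k_t} ∪ qK_2 ∪ sK_1) with t, q, s ≥ 1 and k_i ≥ 3 for 1 ≤ i ≤ t, and let n be the order of G. Then Σ_{uv ∈ E(G)} d_G(u)·d_G(v) = 3(n+2)(n−1−2q) + 4qn − s(2n+7), where the sum runs over all edges uv of G and d_G denotes vertex degree. -/

import Mathlib

open SimpleGraph Finset

namespace Paper

/-- The cone `K₁ ∨ G`: a new apex vertex (`none`) joined to every vertex of `G`. -/
def cone {V : Type*} (G : SimpleGraph V) : SimpleGraph (Option V) where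
  Adj x y :=
    match x, y with
    | none, none => False
    | none, some _ => True
    | some _, none => True
    | some a, some b => G.Adj a b
  symm := by
    refine ⟨?_⟩
    rintro (_ | a) (_ | b) h
    · exact h
    · exact trivial
    · exact trivial
    · exact G.symm.symm _ _ h
  loopless := by
    refine ⟨?_⟩
    rintro (_ | a) h
    · exact h
    · exact G.loopless.irrefl a h

/-- Disjoint union of an indexed family of graphs. -/
def sigmaGraph {ι : Type*} {V : ι → Type*} (G : ∀ i, SimpleGraph (V i)) :
    SimpleGraph (Σ i, V i) where
  Adj x y := ∃ (i : ι) (u v : V i), x = ⟨i, u⟩ ∧ y = ⟨i, v⟩ ∧ (G i).Adj u v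
  symm := by
    refine ⟨?_⟩
    rintro x y ⟨i, u, v, rfl, rfl, h⟩
    exact ⟨i, v, u, rfl, rfl, (G i).symm.symm _ _ h⟩
  loopless := by
    refine ⟨?_⟩
    rintro x ⟨i, u, v, rfl, h2, h⟩
    injection h2 with h3 h4
    subst h4
    exact (G i).loopless.irrefl u h

/-- `q` disjoint copies of `K₂`. -/
def K2s (q : ℕ) : SimpleGraph (Σ _ : Fin q, Fin 2) :=
  sigmaGraph fun _ => (⊤ : SimpleGraph (Fin 2))

/-- The signless Laplacian matrix `Q(G) = D(G) + A(G)`. -/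
noncomputable def QMatrix {V : Type*} [Fintype V] (G : SimpleGraph V) : Matrix V V ℝ :=
  letI := Classical.decEq V
  letI := Classical.decRel G.Adj
  Matrix.diagonal (fun v => (G.degree v : ℝ)) + G.adjMatrix ℝ

/-- The signless Laplacian spectrum, as the multiset of roots of the characteristic
polynomial of `Q(G)` (with multiplicity). -/
noncomputable def Qspectrum {V : Type*} [Fintype V] (G : SimpleGraph V) : Multiset ℝ :=
  letI := Classical.decEq V
  (QMatrix G).charpoly.roots

/-- Multiplicity of `ρ` as a signless Laplacian eigenvalue of `G`. -/
noncomputable def Qmult {V : Type*} [Fintype V] (G : SimpleGraph V) (ρ : ℝ) : ℕ :=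
  (Qspectrum G).count ρ

/-- The `i`-th largest signless Laplacian eigenvalue (1-indexed), i.e. `χ_i(G)`. -/
noncomputable def Qeig {V : Type*} [Fintype V] (G : SimpleGraph V) (i : ℕ) : ℝ :=
  (((Qspectrum G).sort (· ≤ ·)).reverse).getD (i - 1) 0

/-- `G` is determined by its signless Laplacian spectrum. -/
def IsDQS {V : Type*} [Fintype V] (G : SimpleGraph V) : Prop :=
  ∀ (W : Type) [Fintype W] (F : SimpleGraph W),
    Qspectrum F = Qspectrum G → Nonempty (F ≃g G)

/-- The number of subgraphs of `G` isomorphic to `H`. -/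
noncomputable def subgraphCount {V W : Type*} (G : SimpleGraph V) (H : SimpleGraph W) : ℕ :=
  Nat.card {H' : G.Subgraph // Nonempty (H'.coe ≃g H)}

/-- The number of triangle subgraphs of `G` containing a vertex `v`. -/
noncomputable def triangleCountAt {V : Type*} (G : SimpleGraph V) (v : V) : ℕ :=
  Nat.card {H' : G.Subgraph //
    v ∈ H'.verts ∧ Nonempty (H'.coe ≃g (⊤ : SimpleGraph (Fin 3)))}

/-- Vertex degree (with classical decidability). -/
noncomputable def deg {V : Type*} [Fintype V] (G : SimpleGraph V) (v : V) : ℕ :=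
  letI := Classical.decRel G.Adj
  G.degree v

/-- The multiset of vertex degrees of `G`. -/
noncomputable def degreeMultiset {V : Type*} [Fintype V] (G : SimpleGraph V) : Multiset ℕ :=
  (Finset.univ : Finset V).val.map fun v => deg G v

/-- The maximum vertex degree of `G`. -/
noncomputable def maxDeg {V : Type*} [Fintype V] (G : SimpleGraph V) : ℕ :=
  letI := Classical.decRel G.Adj
  G.maxDegree

/-- `S_r(G) = trace(A(G)^r)`, the `r`-th spectral moment. -/
noncomputable def Smoment {V : Type*} [Fintype V] (G : SimpleGraph V) (r : ℕ) : ℝ :=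
  letI := Classical.decEq V
  letI := Classical.decRel G.Adj
  ((G.adjMatrix ℝ) ^ r).trace

/-- `T_r(G) = trace(Q(G)^r)`, the `r`-th signless Laplacian spectral moment. -/
noncomputable def Tmoment {V : Type*} [Fintype V] (G : SimpleGraph V) (r : ℕ) : ℝ :=
  letI := Classical.decEq V
  ((QMatrix G) ^ r).trace

/-- `∑_{uv ∈ E(G)} d_G(u) d_G(v)`. -/
noncomputable def edgeDegSum {V : Type*} [Fintype V] (G : SimpleGraph V) : ℕ :=
  letI := Classical.decEq V
  letI := Classical.decRel G.Adj
  ∑ e ∈ G.edgeFinset,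
    Sym2.lift ⟨fun u v => G.degree u * G.degree v, fun _ _ => Nat.mul_comm _ _⟩ e

/-- The coalescence of `G` at `v` with the apex of `K₁ ∨ r K₂`: add `2r` new vertices
`a_i, b_i` and edges `a_i b_i`, `v a_i`, `v b_i`. -/
def coalescenceK2s {V : Type*} (G : SimpleGraph V) (v : V) (r : ℕ) :
    SimpleGraph (V ⊕ (Fin r × Fin 2)) where
  Adj x y :=
    match x, y with
    | Sum.inl a, Sum.inl b => G.Adj a b
    | Sum.inl a, Sum.inr _ => a = v
    | Sum.inr _, Sum.inl b => b = v
    | Sum.inr p, Sum.inr p' => p.1 = p'.1 ∧ p.2 ≠ p'.2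
  symm := by
    refine ⟨?_⟩
    rintro (a | p) (b | p') h
    · exact G.symm.symm _ _ h
    · exact h
    · exact h
    · exact ⟨h.1.symm, h.2.symm⟩
  loopless := by
    refine ⟨?_⟩
    rintro (a | p) h
    · exact G.loopless.irrefl a h
    · exact h.2 rfl


/-- `K₁ ∨ (C_{k 0} ∪ ⋯ ∪ C_{k (t-1)} ∪ q K₂ ∪ s K₁)`. -/
def coneCycles {t : ℕ} (k : Fin t → ℕ) (q s : ℕ) :
    SimpleGraph (Option ((Σ i, Fin (k i)) ⊕ ((Σ _ : Fin q, Fin 2) ⊕ Fin s))) :=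
  cone ((sigmaGraph fun i => cycleGraph (k i)) ⊕g (K2s q ⊕g (⊥ : SimpleGraph (Fin s))))

/-- `K₁ ∨ (C_k ∪ q K₂ ∪ s K₁)`. -/
def coneOneCycle (k q s : ℕ) :
    SimpleGraph (Option (Fin k ⊕ ((Σ _ : Fin q, Fin 2) ⊕ Fin s))) :=
  cone (cycleGraph k ⊕g (K2s q ⊕g (⊥ : SimpleGraph (Fin s))))

/-- `K₁ ∨ (C₄ ∪ P_{k-3} ∪ P₃ ∪ (q-2) K₂ ∪ s K₁)`. -/
def coneAlt (k q s : ℕ) :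
    SimpleGraph (Option (Fin 4 ⊕ (Fin (k - 3) ⊕ (Fin 3 ⊕ ((Σ _ : Fin (q - 2), Fin 2) ⊕ Fin s))))) :=
  cone (cycleGraph 4 ⊕g (pathGraph (k - 3) ⊕g (pathGraph 3 ⊕g
    (K2s (q - 2) ⊕g (⊥ : SimpleGraph (Fin s))))))

/-- `K₁ ∨ (C₃ ∪ C_{k 0} ∪ ⋯ ∪ C_{k (t'-1)} ∪ q K₂ ∪ s K₁)`. -/
def coneC3Cycles {t' : ℕ} (k : Fin t' → ℕ) (q s : ℕ) :
    SimpleGraph (Option (Fin 3 ⊕ ((Σ i, Fin (k i)) ⊕ ((Σ _ : Fin q, Fin 2) ⊕ Fin s)))) :=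
  cone (cycleGraph 3 ⊕g ((sigmaGraph fun i => cycleGraph (k i)) ⊕g
    (K2s q ⊕g (⊥ : SimpleGraph (Fin s)))))

/-- `K₁ ∨ (K_{1,3} ∪ C_{k 0} ∪ ⋯ ∪ C_{k (t'-1)} ∪ q K₂ ∪ s' K₁)`. -/
def coneStar {t' : ℕ} (k : Fin t' → ℕ) (q s' : ℕ) :
    SimpleGraph (Option ((Fin 1 ⊕ Fin 3) ⊕ ((Σ i, Fin (k i)) ⊕ ((Σ _ : Fin q, Fin 2) ⊕ Fin s')))) :=
  cone (completeBipartiteGraph (Fin 1) (Fin 3) ⊕g ((sigmaGraph fun i => cycleGraph (k i)) ⊕g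
    (K2s q ⊕g (⊥ : SimpleGraph (Fin s')))))

/-- `K₁ ∨ (P_{l 0} ∪ ⋯ ∪ P_{l (q-1)} ∪ s K₁)`. -/
def conePaths {q : ℕ} (l : Fin q → ℕ) (s : ℕ) :
    SimpleGraph (Option ((Σ i, Fin (l i)) ⊕ Fin s)) :=
  cone ((sigmaGraph fun i => pathGraph (l i)) ⊕g (⊥ : SimpleGraph (Fin s)))

/-- `K₁ ∨ (C_{k 0} ∪ ⋯ ∪ C_{k (z-1)} ∪ P_{l 0} ∪ ⋯ ∪ P_{l (q-1)} ∪ s K₁)`. -/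
def coneCyclesPaths {z q : ℕ} (k : Fin z → ℕ) (l : Fin q → ℕ) (s : ℕ) :
    SimpleGraph (Option ((Σ i, Fin (k i)) ⊕ ((Σ i, Fin (l i)) ⊕ Fin s))) :=
  cone ((sigmaGraph fun i => cycleGraph (k i)) ⊕g
    ((sigmaGraph fun i => pathGraph (l i)) ⊕g (⊥ : SimpleGraph (Fin s))))

/-- The quartic polynomial `p_{n,q,s}` from the paper. -/
noncomputable def quartic (n q s : ℕ) (x : ℝ) : ℝ :=
  x ^ 4 - ((n : ℝ) + 8) * x ^ 3 + (8 * (n : ℝ) + 15) * x ^ 2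
    + (4 * (q : ℝ) + 4 * (s : ℝ) - 19 * (n : ℝ) + 4) * x
    + (12 * (n : ℝ) - 4 * (q : ℝ) - 12 * (s : ℝ) - 12)

/-- The multiset `{3 + 2 cos (2jπ/k_i) : 1 ≤ j ≤ k_i - 1, 1 ≤ i ≤ t}`. -/
noncomputable def cycleEigs {t : ℕ} (k : Fin t → ℕ) : Multiset ℝ :=
  ∑ i : Fin t, (Multiset.range (k i - 1)).map
    (fun j => 3 + 2 * Real.cos (2 * ((j : ℝ) + 1) * Real.pi / (k i : ℝ)))

/-!
Double counting gives `2 ∑_{uv ∈ E} d(u) d(v) = ∑_u d(u) ∑_{v ∼ u} d(v)`. In a cone `K₁ ∨ H` over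
a graph `H` on `m` vertices whose edges join vertices of equal degree, every term is explicit: the
apex has degree `m`, and a vertex of degree `d` in `H` has degree `d + 1`, `d` neighbours of degree
`d + 1`, and the apex. Here `d = 2` on the cycles, `d = 1` on the copies of `K₂` and `d = 0` on the
isolated vertices, and `m = n - 1`.
-/

section DoubleCounting

variable {V : Type*} [Fintype V] (G : SimpleGraph V) [DecidableRel G.Adj]

theorem sum_neighborFinset_eq_sum_darts [DecidableEq V] {M : Type*} [AddCommMonoid M]
    (f : V → V → M) : ∑ u, ∑ v ∈ G.neighborFinset u, f u v = ∑ d : G.Dart, f d.fst d.snd := by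
  rw [← sum_fiberwise univ (fun d : G.Dart => d.fst)]
  refine sum_congr rfl fun u _ => ?_
  rw [dart_fst_fiber, sum_image fun _ _ _ _ h => G.dartOfNeighborSet_injective u h]
  exact (sum_set_coe (f := f u) (G.neighborSet u)).symm

theorem sum_darts_edge_eq_two_nsmul [DecidableEq V] {M : Type*} [AddCommMonoid M]
    (g : Sym2 V → M) : ∑ d : G.Dart, g d.edge = 2 • ∑ e ∈ G.edgeFinset, g e := by
  rw [← sum_fiberwise_of_maps_to (g := Dart.edge) (t := G.edgeFinset)
    fun d _ => mem_edgeFinset.2 d.edge_mem, smul_sum]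
  refine sum_congr rfl fun e he => ?_
  rw [sum_congr rfl fun d hd => congrArg g (mem_filter.1 hd).2, sum_const,
    G.dart_edge_fiber_card e (mem_edgeFinset.1 he)]

theorem two_mul_edgeDegSum :
    2 * edgeDegSum G = ∑ u, ∑ v ∈ G.neighborFinset u, G.degree u * G.degree v := by
  classical
  rw [sum_neighborFinset_eq_sum_darts, edgeDegSum, ← smul_eq_mul]
  convert (sum_darts_edge_eq_two_nsmul G
    (Sym2.lift ⟨fun u v => G.degree u * G.degree v, fun _ _ => Nat.mul_comm _ _⟩)).symm
  rfl

end DoubleCounting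

section Cone

variable {V : Type*} (G : SimpleGraph V)

@[simp] theorem cone_adj_none_some (a : V) : (cone G).Adj none (some a) := trivial

@[simp] theorem cone_adj_some_none (a : V) : (cone G).Adj (some a) none := trivial

@[simp] theorem cone_adj_some_some (a b : V) : (cone G).Adj (some a) (some b) ↔ G.Adj a b :=
  Iff.rfl

theorem neighborFinset_cone_none [Fintype V] [Fintype ((cone G).neighborSet none)] :
    (cone G).neighborFinset none = univ.map Function.Embedding.some := by
  ext (_ | a) <;> simp

theorem neighborFinset_cone_some (a : V) [Fintype (G.neighborSet a)]
    [Fintype ((cone G).neighborSet (some a))] :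
    (cone G).neighborFinset (some a) =
      cons none ((G.neighborFinset a).map Function.Embedding.some) (by simp) := by
  ext (_ | b) <;> simp

theorem sum_neighborFinset_cone_none [Fintype V] [Fintype ((cone G).neighborSet none)]
    {M : Type*} [AddCommMonoid M] (f : Option V → M) :
    ∑ v ∈ (cone G).neighborFinset none, f v = ∑ a, f (some a) := by
  rw [neighborFinset_cone_none, sum_map]
  rfl

theorem sum_neighborFinset_cone_some (a : V) [Fintype (G.neighborSet a)]
    [Fintype ((cone G).neighborSet (some a))] {M : Type*} [AddCommMonoid M] (f : Option V → M) :
    ∑ v ∈ (cone G).neighborFinset (some a), f v =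
      f none + ∑ b ∈ G.neighborFinset a, f (some b) := by
  rw [neighborFinset_cone_some, sum_cons, sum_map]
  rfl

theorem degree_cone_none [Fintype V] [Fintype ((cone G).neighborSet none)] :
    (cone G).degree none = Fintype.card V := by
  rw [← card_neighborFinset_eq_degree, neighborFinset_cone_none, card_map, card_univ]

theorem degree_cone_some (a : V) [Fintype (G.neighborSet a)]
    [Fintype ((cone G).neighborSet (some a))] :
    (cone G).degree (some a) = G.degree a + 1 := by
  rw [← card_neighborFinset_eq_degree, neighborFinset_cone_some, card_cons, card_map,
    card_neighborFinset_eq_degree]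

/-- A vertex `a` of `G` of degree `d` contributes `(d + 1) (m + d (d + 1))` from its own
neighbourhood and `m (d + 1)` to the apex's term, where `m = |V|`. -/
theorem two_mul_edgeDegSum_cone [Fintype V] [DecidableRel G.Adj]
    (hG : ∀ a b, G.Adj a b → G.degree a = G.degree b) :
    2 * edgeDegSum (cone G) = ∑ a, (G.degree a + 1) *
      (2 * Fintype.card V + G.degree a * (G.degree a + 1)) := by
  classical
  have neighbors (a : V) : ∑ b ∈ G.neighborFinset a, (G.degree a + 1) * (G.degree b + 1) =
      (G.degree a + 1) * (G.degree a * (G.degree a + 1)) := by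
    rw [sum_congr rfl fun b hb => by rw [← hG a b ((mem_neighborFinset G a b).1 hb)],
      sum_const, card_neighborFinset_eq_degree, smul_eq_mul]
    ring
  simp only [two_mul_edgeDegSum, Fintype.sum_option, sum_neighborFinset_cone_none,
    sum_neighborFinset_cone_some, degree_cone_none, degree_cone_some, neighbors,
    ← sum_add_distrib]
  refine sum_congr rfl fun a _ => ?_
  ring

end Cone

section DisjointUnion

variable {V W : Type*} (G : SimpleGraph V) (H : SimpleGraph W)

theorem neighborFinset_sum_inl (v : V) [Fintype (G.neighborSet v)]
    [Fintype ((G ⊕g H).neighborSet (.inl v))] :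
    (G ⊕g H).neighborFinset (.inl v) = (G.neighborFinset v).map .inl := by
  ext (_ | _) <;> simp

theorem neighborFinset_sum_inr (w : W) [Fintype (H.neighborSet w)]
    [Fintype ((G ⊕g H).neighborSet (.inr w))] :
    (G ⊕g H).neighborFinset (.inr w) = (H.neighborFinset w).map .inr := by
  ext (_ | _) <;> simp

theorem degree_sum_inl (v : V) [Fintype (G.neighborSet v)]
    [Fintype ((G ⊕g H).neighborSet (.inl v))] : (G ⊕g H).degree (.inl v) = G.degree v := by
  rw [← card_neighborFinset_eq_degree, neighborFinset_sum_inl, card_map,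
    card_neighborFinset_eq_degree]

theorem degree_sum_inr (w : W) [Fintype (H.neighborSet w)]
    [Fintype ((G ⊕g H).neighborSet (.inr w))] : (G ⊕g H).degree (.inr w) = H.degree w := by
  rw [← card_neighborFinset_eq_degree, neighborFinset_sum_inr, card_map,
    card_neighborFinset_eq_degree]

variable {ι : Type*} {X : ι → Type*} (F : ∀ i, SimpleGraph (X i))

theorem sigmaGraph_adj_mk_iff {i : ι} (u : X i) (y : Σ i, X i) :
    (sigmaGraph F).Adj ⟨i, u⟩ y ↔ ∃ v, (F i).Adj u v ∧ ⟨i, v⟩ = y := by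
  constructor
  · rintro ⟨j, u', v, hx, rfl, h⟩
    obtain ⟨rfl, hu⟩ := Sigma.mk.inj_iff.1 hx
    cases hu
    exact ⟨v, h, rfl⟩
  · rintro ⟨v, h, rfl⟩
    exact ⟨i, u, v, rfl, rfl, h⟩

theorem neighborFinset_sigmaGraph {i : ι} (u : X i) [Fintype ((F i).neighborSet u)]
    [Fintype ((sigmaGraph F).neighborSet ⟨i, u⟩)] :
    (sigmaGraph F).neighborFinset ⟨i, u⟩ = ((F i).neighborFinset u).map (.sigmaMk i) := by
  ext y
  simp [sigmaGraph_adj_mk_iff]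

theorem degree_sigmaGraph {i : ι} (u : X i) [Fintype ((F i).neighborSet u)]
    [Fintype ((sigmaGraph F).neighborSet ⟨i, u⟩)] :
    (sigmaGraph F).degree ⟨i, u⟩ = (F i).degree u := by
  rw [← card_neighborFinset_eq_degree, neighborFinset_sigmaGraph, card_map,
    card_neighborFinset_eq_degree]

end DisjointUnion

theorem cycleGraph_degree_eq_two {m : ℕ} (hm : 3 ≤ m) (v : Fin m)
    [Fintype ((cycleGraph m).neighborSet v)] : (cycleGraph m).degree v = 2 := by
  obtain ⟨m, rfl⟩ := Nat.exists_eq_add_of_le' hm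
  convert cycleGraph_degree_three_le

section ConeCycles

variable {t : ℕ} (k : Fin t → ℕ) (q s : ℕ)

abbrev cyclesK2sIsolated : SimpleGraph ((Σ i, Fin (k i)) ⊕ ((Σ _ : Fin q, Fin 2) ⊕ Fin s)) :=
  (sigmaGraph fun i => cycleGraph (k i)) ⊕g (K2s q ⊕g (⊥ : SimpleGraph (Fin s)))

theorem coneCycles_eq_cone : coneCycles k q s = cone (cyclesK2sIsolated k q s) := rfl

variable {k q s}

theorem degree_cyclesK2sIsolated (hk : ∀ i, 3 ≤ k i)
    (v : (Σ i, Fin (k i)) ⊕ ((Σ _ : Fin q, Fin 2) ⊕ Fin s))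
    [Fintype ((cyclesK2sIsolated k q s).neighborSet v)] :
    (cyclesK2sIsolated k q s).degree v =
      Sum.elim (fun _ => 2) (Sum.elim (fun _ => 1) fun _ => 0) v := by
  classical
  rcases v with ⟨i, u⟩ | ⟨j, u⟩ | c
  · rw [degree_sum_inl, degree_sigmaGraph, cycleGraph_degree_eq_two (hk i)]
    rfl
  · rw [degree_sum_inr, degree_sum_inl, K2s, degree_sigmaGraph]
    simp
  · rw [degree_sum_inr, degree_sum_inr, bot_degree]
    rfl

theorem two_mul_edgeDegSum_coneCycles (hk : ∀ i, 3 ≤ k i) :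
    2 * edgeDegSum (coneCycles k q s) =
      let m := Fintype.card ((Σ i, Fin (k i)) ⊕ ((Σ _ : Fin q, Fin 2) ⊕ Fin s))
      (∑ i, k i) * (3 * (2 * m + 6)) + 2 * q * (2 * (2 * m + 2)) + s * (2 * m) := by
  classical
  have hdeg := degree_cyclesK2sIsolated (q := q) (s := s) hk
  rw [coneCycles_eq_cone, two_mul_edgeDegSum_cone]
  · simp only [Fintype.sum_sum_type, hdeg, Sum.elim_inl, Sum.elim_inr, sum_const, card_univ,
      Fintype.card_sigma, Fintype.card_fin, smul_eq_mul]
    ring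
  · intro v w hvw
    rw [hdeg, hdeg]
    rcases v with _ | _ | _ <;> rcases w with _ | _ | _ <;> first | rfl | simp at hvw

end ConeCycles

theorem edge_degree_product_sum_coneCycles_general
    (t q s n : ℕ)
    (k : Fin t → ℕ) (hk : ∀ i, 3 ≤ k i)
    (hn : n = Fintype.card (Option ((Σ i, Fin (k i)) ⊕ ((Σ _ : Fin q, Fin 2) ⊕ Fin s)))) :
    (edgeDegSum (coneCycles k q s) : ℤ) =
      3 * ((n : ℤ) + 2) * ((n : ℤ) - 1 - 2 * (q : ℤ)) + 4 * (q : ℤ) * (n : ℤ)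
        - (s : ℤ) * (2 * (n : ℤ) + 7) := by
  have hsum := two_mul_edgeDegSum_coneCycles (q := q) (s := s) hk
  simp only [Fintype.card_option, Fintype.card_sum, Fintype.card_sigma, Fintype.card_fin,
    sum_const, card_univ, smul_eq_mul] at hn hsum
  subst hn
  have hsumZ := congrArg (Nat.cast : ℕ → ℤ) hsum
  push_cast at hsumZ ⊢
  linarith

/-- Lemma 4.2 (iv): for `G = K₁ ∨ (C_{k₁} ∪ ⋯ ∪ C_{k_t} ∪ q K₂ ∪ s K₁)` of order `n`,
`∑_{uv ∈ E(G)} d_G(u) d_G(v) = 3(n+2)(n-1-2q) + 4qn - s(2n+7)`. -/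
theorem edge_degree_product_sum_coneCycles
    (t q s n : ℕ) (ht : 1 ≤ t) (hq : 1 ≤ q) (hs : 1 ≤ s)
    (k : Fin t → ℕ) (hk : ∀ i, 3 ≤ k i)
    (hn : n = Fintype.card (Option ((Σ i, Fin (k i)) ⊕ ((Σ _ : Fin q, Fin 2) ⊕ Fin s)))) :
    (edgeDegSum (coneCycles k q s) : ℤ) =
      3 * ((n : ℤ) + 2) * ((n : ℤ) - 1 - 2 * (q : ℤ)) + 4 * (q : ℤ) * (n : ℤ)
        - (s : ℤ) * (2 * (n : ℤ) + 7) :=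
  edge_degree_product_sum_coneCycles_general t q s n k hk hn

end Paper
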